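/- If P2 is infeasible, then the Jacobian matrix J(v) of the load-flow map is nonsingular for every (v₁, …, v_N) satisfying the non-strict security constraints v^min ≤ v_n ≤ v^max for all n ∈ {1, …, N} and |g_{nk}(v_n − v_k)| ≤ i_{nk}^max for all n ∈ {1, …, N} and k ∈ K(n); in particular, J(v) is nonsingular for every v satisfying the strict security constraints. -/
import Mathlib


/-- Extension of a PQ-bus voltage vector `u : Fin N → ℝ` to bus indices `{0,…,N}`:
bus `k ∈ {1,…,N}` gets voltage `u (k-1)`, and bus `0` (the slack) gets `v₀`. -/
def extV (N : ℕ) (v₀ : ℝ) (u : Fin N → ℝ) : ℕ → ℝ :=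
  fun k => if h : 1 ≤ k ∧ k ≤ N then u ⟨k - 1, by omega⟩ else v₀

/-- Extension of a vector `γ : Fin N → ℝ` to bus indices, by `0` outside `{1,…,N}`. -/
def extZ (N : ℕ) (γ : Fin N → ℝ) : ℕ → ℝ :=
  fun k => if h : 1 ≤ k ∧ k ≤ N then γ ⟨k - 1, by omega⟩ else 0

/-- The Jacobian matrix `J(v)` of the load-flow map. -/
def Jmat (N : ℕ) (K : ℕ → Finset ℕ) (g : ℕ → ℕ → ℝ) (v₀ : ℝ)
    (u : Fin N → ℝ) : Matrix (Fin N) (Fin N) ℝ :=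
  Matrix.of fun i j =>
    if i = j then
      2 * (∑ k ∈ K ((i : ℕ) + 1), g ((i : ℕ) + 1) k) * u i
        - ∑ k ∈ K ((i : ℕ) + 1), g ((i : ℕ) + 1) k * extV N v₀ u k
    else if ((j : ℕ) + 1) ∈ K ((i : ℕ) + 1) then
      -(g ((i : ℕ) + 1) ((j : ℕ) + 1) * u i)
    else 0

/-- Feasibility of the polynomial optimization `P2` (PQ buses indexed by `Fin N`). -/
def P2Feasible (N : ℕ) (K : ℕ → Finset ℕ) (g : ℕ → ℕ → ℝ) (v₀ vmin vmax : ℝ)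
    (imax : ℕ → ℕ → ℝ) : Prop :=
  ∃ v γ : Fin N → ℝ,
    (∀ i : Fin N, vmin ≤ v i ∧ v i ≤ vmax) ∧
    (∀ i : Fin N, ∀ k ∈ K ((i : ℕ) + 1),
      |g ((i : ℕ) + 1) k * (v i - extV N v₀ v k)| ≤ imax ((i : ℕ) + 1) k) ∧
    (∑ i : Fin N, (γ i) ^ 2 = 1) ∧
    (∀ i : Fin N,
      (2 * (∑ k ∈ K ((i : ℕ) + 1), g ((i : ℕ) + 1) k) * v i
          - ∑ k ∈ K ((i : ℕ) + 1), g ((i : ℕ) + 1) k * extV N v₀ v k) * γ i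
        = ∑ k ∈ (K ((i : ℕ) + 1)).erase 0, g ((i : ℕ) + 1) k * v i * extZ N γ k)

/-- If `P2` is infeasible, then the Jacobian matrix `J(v)` of the load-flow map is
nonsingular for every `v` satisfying the non-strict security constraints; in particular,
`J(v)` is nonsingular for every `v` satisfying the strict security constraints. -/
theorem P2_infeasible_implies_jacobian_nonsingular
    (N : ℕ) (hN : 1 ≤ N)
    (K : ℕ → Finset ℕ)
    (hKsub : ∀ n, n ≤ N → ∀ k ∈ K n, k ≤ N ∧ k ≠ n)
    (hKsymm : ∀ n, n ≤ N → ∀ k, k ≤ N → (k ∈ K n ↔ n ∈ K k))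
    (g : ℕ → ℕ → ℝ)
    (hg : ∀ n k, k ∈ K n → 0 < g n k)
    (hgsymm : ∀ n k, g n k = g k n)
    (v₀ vmin vmax : ℝ) (hv₀ : 0 < v₀) (hvmin : 0 < vmin) (hvmax : 0 < vmax)
    (imax : ℕ → ℕ → ℝ)
    (himax : ∀ n, 1 ≤ n → n ≤ N → ∀ k ∈ K n, 0 < imax n k)
    (hP2 : ¬ P2Feasible N K g v₀ vmin vmax imax) :
    (∀ v : Fin N → ℝ,
      (∀ i : Fin N, vmin ≤ v i ∧ v i ≤ vmax) →
      (∀ i : Fin N, ∀ k ∈ K ((i : ℕ) + 1),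
        |g ((i : ℕ) + 1) k * (v i - extV N v₀ v k)| ≤ imax ((i : ℕ) + 1) k) →
      (Jmat N K g v₀ v).det ≠ 0) ∧
    (∀ v : Fin N → ℝ,
      (∀ i : Fin N, vmin < v i ∧ v i < vmax) →
      (∀ i : Fin N, ∀ k ∈ K ((i : ℕ) + 1),
        |g ((i : ℕ) + 1) k * (v i - extV N v₀ v k)| < imax ((i : ℕ) + 1) k) →
      (Jmat N K g v₀ v).det ≠ 0) := by
  
  have main : ∀ v : Fin N → ℝ,
      (∀ i : Fin N, vmin ≤ v i ∧ v i ≤ vmax) →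
      (∀ i : Fin N, ∀ k ∈ K ((i : ℕ) + 1),
        |g ((i : ℕ) + 1) k * (v i - extV N v₀ v k)| ≤ imax ((i : ℕ) + 1) k) →
      (Jmat N K g v₀ v).det ≠ 0 := by
    intro v hv hcur hdet
    obtain ⟨γ, hγne, hγ⟩ := (Matrix.exists_mulVec_eq_zero_iff).2 hdet
    have hsumpos : 0 < ∑ i : Fin N, (γ i) ^ 2 := by
      obtain ⟨i0, hi0⟩ := Function.ne_iff.1 hγne
      have hi0' : γ i0 ≠ 0 := by simpa using hi0
      refine Finset.sum_pos' (fun i _ => sq_nonneg _) ⟨i0, Finset.mem_univ _, ?_⟩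
      positivity
    set s : ℝ := Real.sqrt (∑ i : Fin N, (γ i) ^ 2) with hs
    have hspos : 0 < s := Real.sqrt_pos.2 hsumpos
    have hs2 : s ^ 2 = ∑ i : Fin N, (γ i) ^ 2 := Real.sq_sqrt hsumpos.le
    refine hP2 ⟨v, fun i => γ i / s, hv, hcur, ?_, ?_⟩
    · have : ∑ i : Fin N, (γ i / s) ^ 2 = (∑ i : Fin N, (γ i) ^ 2) / s ^ 2 := by
        rw [Finset.sum_div]
        exact Finset.sum_congr rfl fun i _ => by field_simp
      rw [this, ← hs2, div_self (by positivity)]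
    · intro i
      have hmv : ∑ j : Fin N, (Jmat N K g v₀ v) i j * γ j = 0 := by
        have := congrFun hγ i
        simpa [Matrix.mulVec, dotProduct] using this
      have hsplit := hmv
      rw [← Finset.add_sum_erase Finset.univ
        (fun j => Jmat N K g v₀ v i j * γ j) (Finset.mem_univ i)] at hsplit
      have hdiagγ : (2 * (∑ k ∈ K ((i : ℕ) + 1), g ((i : ℕ) + 1) k) * v i
          - ∑ k ∈ K ((i : ℕ) + 1), g ((i : ℕ) + 1) k * extV N v₀ v k) * γ i
          = ∑ j ∈ Finset.univ.erase i,
              (if ((j : ℕ) + 1) ∈ K ((i : ℕ) + 1) then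
                g ((i : ℕ) + 1) ((j : ℕ) + 1) * v i * γ j else 0) := by
        have hd : (Jmat N K g v₀ v) i i
            = 2 * (∑ k ∈ K ((i : ℕ) + 1), g ((i : ℕ) + 1) k) * v i
              - ∑ k ∈ K ((i : ℕ) + 1), g ((i : ℕ) + 1) k * extV N v₀ v k := by
          simp [Jmat]
        have hoff : ∀ j ∈ Finset.univ.erase i, (Jmat N K g v₀ v) i j * γ j
            = -(if ((j : ℕ) + 1) ∈ K ((i : ℕ) + 1) then
                g ((i : ℕ) + 1) ((j : ℕ) + 1) * v i * γ j else 0) := by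
          intro j hj
          have hij : i ≠ j := (Finset.ne_of_mem_erase hj).symm
          by_cases hk : ((j : ℕ) + 1) ∈ K ((i : ℕ) + 1)
          · simp only [Jmat, Matrix.of_apply, if_neg hij, if_pos hk]; ring
          · simp only [Jmat, Matrix.of_apply, if_neg hij, if_neg hk]; ring
        rw [Finset.sum_congr rfl hoff, Finset.sum_neg_distrib, hd] at hsplit
        linarith [hsplit]
      have hiN : (i : ℕ) + 1 ≤ N := i.2
      have hRHS : ∀ w : Fin N → ℝ,
          (∑ k ∈ (K ((i : ℕ) + 1)).erase 0, g ((i : ℕ) + 1) k * v i * extZ N w k)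
          = ∑ j ∈ Finset.univ.erase i,
              (if ((j : ℕ) + 1) ∈ K ((i : ℕ) + 1) then
                g ((i : ℕ) + 1) ((j : ℕ) + 1) * v i * w j else 0) := by
        intro w
        rw [← Finset.sum_filter]
        refine Finset.sum_nbij'
          (i := fun k => (⟨(k - 1) % N, Nat.mod_lt _ (by omega)⟩ : Fin N))
          (j := fun j => (j : ℕ) + 1) ?_ ?_ ?_ ?_ ?_
        · intro k hk
          have hk0 : k ≠ 0 := Finset.ne_of_mem_erase hk
          have hkm := Finset.mem_of_mem_erase hk
          obtain ⟨hkN, hkne⟩ := hKsub ((i : ℕ) + 1) hiN k hkm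
          have hmod : (k - 1) % N = k - 1 := Nat.mod_eq_of_lt (by omega)
          refine Finset.mem_filter.2 ⟨Finset.mem_erase.2 ⟨?_, Finset.mem_univ _⟩, ?_⟩
          · refine Fin.ne_of_val_ne ?_
            simp only
            omega
          · show (k - 1) % N + 1 ∈ K ((i : ℕ) + 1)
            have h2 : (k - 1) % N + 1 = k := by omega
            rw [h2]; exact hkm
        · intro j hj
          have hj' := Finset.mem_filter.1 hj
          exact Finset.mem_erase.2 ⟨Nat.succ_ne_zero _, hj'.2⟩
        · intro k hk
          have hk0 : k ≠ 0 := Finset.ne_of_mem_erase hk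
          have hkm := Finset.mem_of_mem_erase hk
          obtain ⟨hkN, hkne⟩ := hKsub ((i : ℕ) + 1) hiN k hkm
          have hmod : (k - 1) % N = k - 1 := Nat.mod_eq_of_lt (by omega)
          simp only
          omega
        · intro j hj
          apply Fin.ext
          simp only
          rw [Nat.add_sub_cancel, Nat.mod_eq_of_lt j.2]
        · intro k hk
          have hk0 : k ≠ 0 := Finset.ne_of_mem_erase hk
          have hkm := Finset.mem_of_mem_erase hk
          obtain ⟨hkN, hkne⟩ := hKsub ((i : ℕ) + 1) hiN k hkm
          have hmod : (k - 1) % N = k - 1 := Nat.mod_eq_of_lt (by omega)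
          have h2 : (k - 1) % N + 1 = k := by omega
          simp only
          rw [h2, extZ, dif_pos ⟨by omega, hkN⟩]
          congr 1
          exact congrArg w (Fin.ext (by simp [hmod])).symm
      rw [hRHS]
      calc (2 * (∑ k ∈ K ((i : ℕ) + 1), g ((i : ℕ) + 1) k) * v i
          - ∑ k ∈ K ((i : ℕ) + 1), g ((i : ℕ) + 1) k * extV N v₀ v k) * (γ i / s)
          = ((2 * (∑ k ∈ K ((i : ℕ) + 1), g ((i : ℕ) + 1) k) * v i
          - ∑ k ∈ K ((i : ℕ) + 1), g ((i : ℕ) + 1) k * extV N v₀ v k) * γ i) / s := by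
            ring
        _ = (∑ j ∈ Finset.univ.erase i,
              (if ((j : ℕ) + 1) ∈ K ((i : ℕ) + 1) then
                g ((i : ℕ) + 1) ((j : ℕ) + 1) * v i * γ j else 0)) / s := by
            rw [hdiagγ]
        _ = ∑ j ∈ Finset.univ.erase i,
              (if ((j : ℕ) + 1) ∈ K ((i : ℕ) + 1) then
                g ((i : ℕ) + 1) ((j : ℕ) + 1) * v i * (γ j / s) else 0) := by
            rw [Finset.sum_div]
            refine Finset.sum_congr rfl fun j _ => ?_
            by_cases hk : ((j : ℕ) + 1) ∈ K ((i : ℕ) + 1)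
            · rw [if_pos hk, if_pos hk]; ring
            · rw [if_neg hk, if_neg hk, zero_div]
  refine ⟨main, fun v hv hcur => main v (fun i => ⟨(hv i).1.le, (hv i).2.le⟩)
    (fun i k hk => (hcur i k hk).le)⟩
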